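/- For the unequal-helicity state, the entanglement E_ξ(δ) = H((1 + sqrt(cos²(2η) + cos²δ·sin²(2η)))/2) is monotonically increasing in δ on (0, π/2) and monotonically decreasing on (π/2, π). -/
import Mathlib


open Real Set

noncomputable def binEnt (p : ℝ) : ℝ := -(p * Real.logb 2 p) - (1 - p) * Real.logb 2 (1 - p)

/-- Boosted-frame entanglement for the unequal-helicity state. -/
noncomputable def Exient (η δ : ℝ) : ℝ :=
  binEnt ((1 + Real.sqrt (Real.cos (2*η)^2 + Real.cos δ ^2 * Real.sin (2*η)^2)) / 2)

lemma binEnt_eq (p : ℝ) : binEnt p = Real.binEntropy p / Real.log 2 := by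
  simp [binEnt, Real.binEntropy, Real.logb, Real.log_inv]
  ring

lemma binEnt_antitoneOn : AntitoneOn binEnt (Icc (2⁻¹ : ℝ) 1) := by
  intro x hx y hy hxy
  rw [binEnt_eq, binEnt_eq]
  apply div_le_div_of_nonneg_right _ (Real.log_pos (by norm_num : (1:ℝ) < 2)).le
  exact (Real.binEntropy_strictAntiOn.antitoneOn) hx hy hxy

lemma Exient_le (η : ℝ) {x y : ℝ} (h : Real.cos y ^ 2 ≤ Real.cos x ^ 2) :
    Exient η x ≤ Exient η y := by
  set a := Real.cos (2*η)^2 with ha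
  set b := Real.sin (2*η)^2 with hb
  have hab : b + a = 1 := Real.sin_sq_add_cos_sq (2*η)
  have hb0 : 0 ≤ b := sq_nonneg _
  have ha0 : 0 ≤ a := sq_nonneg _
  have hcx : Real.cos x ^ 2 ≤ 1 := Real.cos_sq_le_one x
  have h1 : a + Real.cos y ^ 2 * b ≤ a + Real.cos x ^ 2 * b := by nlinarith
  have h2 : a + Real.cos x ^ 2 * b ≤ 1 := by nlinarith
  have h3 : (0:ℝ) ≤ a + Real.cos y ^ 2 * b := by nlinarith [sq_nonneg (Real.cos y)]
  have hs1 : Real.sqrt (a + Real.cos y ^ 2 * b) ≤ Real.sqrt (a + Real.cos x ^ 2 * b) :=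
    Real.sqrt_le_sqrt h1
  have hs2 : Real.sqrt (a + Real.cos x ^ 2 * b) ≤ 1 := by
    rw [show (1:ℝ) = Real.sqrt 1 by simp]
    exact Real.sqrt_le_sqrt h2
  have hs3 : 0 ≤ Real.sqrt (a + Real.cos y ^ 2 * b) := Real.sqrt_nonneg _
  have hs4 : 0 ≤ Real.sqrt (a + Real.cos x ^ 2 * b) := Real.sqrt_nonneg _
  unfold Exient
  apply binEnt_antitoneOn
  · constructor <;> [norm_num; skip] <;> linarith
  · constructor <;> [norm_num; skip] <;> linarith
  · linarith

theorem stmt_8 (η : ℝ) :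
    MonotoneOn (fun δ => Exient η δ) (Icc 0 (π/2)) ∧
    AntitoneOn (fun δ => Exient η δ) (Icc (π/2) π) := by
  constructor
  · intro x hx y hy hxy
    apply Exient_le
    have hcy : 0 ≤ Real.cos y := Real.cos_nonneg_of_mem_Icc ⟨by linarith [hy.1, Real.pi_pos], hy.2⟩
    have hle : Real.cos y ≤ Real.cos x := by
      apply Real.cos_le_cos_of_nonneg_of_le_pi hx.1 (by linarith [hy.2, Real.pi_pos]) hxy
    nlinarith
  · intro x hx y hy hxy
    apply Exient_le
    have hcy : Real.cos y ≤ 0 := Real.cos_nonpos_of_pi_div_two_le_of_le hy.1 (by linarith [hy.2, Real.pi_pos])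
    have hcx : Real.cos x ≤ 0 := Real.cos_nonpos_of_pi_div_two_le_of_le hx.1 (by linarith [hx.2, Real.pi_pos])
    have hle : Real.cos y ≤ Real.cos x := by
      apply Real.cos_le_cos_of_nonneg_of_le_pi (by linarith [hx.1, Real.pi_pos]) hy.2 hxy
    nlinarith
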